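/- arXiv:1210.7528 — 2 statements merged into one kernel-verified Lean document; each statement's English description precedes it below -/
import Mathlib

section
/- Let η(x) = 3/4 + (3/2)c + x/2 - (√3/4)·√((1 - 2c - 2x)(3 + 2c + 2x)) where c = -1/2 + 11/(10√6). Then x* = -√(29/2)/10 satisfies η(x*) = x*; i.e., x* is a fixed point of the first return map η of Case 13₂ with parameters α = -1, β = 1/2, λ = -1/2 + 11√6/60. -/
/-!
Writing `c = d - 1/2`, the radicand of `η` is `4 (1 - (d + x)²)`, and squaring the equation
`η x = x` turns it into `x² + 3 d² = 3/4` together with the sign condition `x ≤ 3 d`.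
For `d = 11 √6 / 60` this gives `x² = 29/200`, and `x* = -√(29/2)/10` is the root with `x ≤ 3 d`.
-/

open Real

noncomputable def returnMap (c x : ℝ) : ℝ :=
  3/4 + (3/2) * c + x/2 - (√3 / 4) * √((1 - 2*c - 2*x) * (3 + 2*c + 2*x))

theorem returnMap_eq_self {c x : ℝ} (hconic : x ^ 2 + 3 * (c + 1/2) ^ 2 = 3/4)
    (hsign : x ≤ 3 * (c + 1/2)) : returnMap c x = x := by
  have hsq : 3 * ((1 - 2*c - 2*x) * (3 + 2*c + 2*x)) = (3 + 6*c - 2*x) ^ 2 := by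
    linear_combination (-16) * hconic
  have hroot : √3 * √((1 - 2*c - 2*x) * (3 + 2*c + 2*x)) = 3 + 6*c - 2*x := by
    rw [← sqrt_mul (by norm_num), hsq, sqrt_sq (by linarith)]
  unfold returnMap
  linear_combination (-1/4) * hroot

theorem eleven_div_ten_mul_sqrt_six : 11 / (10 * √6) = 11 * √6 / 60 := by
  have h6 : √6 ^ 2 = 6 := sq_sqrt (by norm_num)
  field_simp
  linear_combination (-10) * h6

/-- The first return map η of Case 13₂ (α = -1, β = 1/2, λ = -1/2 + 11√6/60)
has fixed point x* = -√(29/2)/10. -/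
theorem stmt10 :
    let c : ℝ := -1/2 + 11 / (10 * Real.sqrt 6)
    let η : ℝ → ℝ := fun x => 3/4 + (3/2) * c + x/2 -
      (Real.sqrt 3 / 4) * Real.sqrt ((1 - 2*c - 2*x) * (3 + 2*c + 2*x))
    η (-(Real.sqrt (29/2)) / 10) = -(Real.sqrt (29/2)) / 10 := by
  intro c η
  have hd : c + 1/2 = 11 * √6 / 60 := by simp only [c, eleven_div_ten_mul_sqrt_six]; ring
  have h6 : √6 ^ 2 = 6 := sq_sqrt (by norm_num)
  have h29 : √(29/2) ^ 2 = 29/2 := sq_sqrt (by norm_num)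
  refine returnMap_eq_self (c := c) ?_ ?_
  · rw [hd]
    linear_combination h29 / 100 + 121 / 1200 * h6
  · rw [hd]
    have ht : 0 ≤ √(29/2) := sqrt_nonneg _
    have hs : 0 ≤ √6 := sqrt_nonneg _
    linarith
end

section
/- For β ∈ (0, √3/2), the three values L₀, L₁, L₂ defined by L₀ = [-9 - 6β + √(9-12β²) + √2·√(15 + √(9-12β²) - 2β(-3 + 2β + √(9-12β²)))]/12, L₁ = -1/2 + √(9-12β²)/6, L₂ = [-9 + 6β + √(9-12β²) + √2·√(15 + √(9-12β²) + 2β(-3 + 2β + √(9-12β²)))]/12 satisfy L₀ < L₁ < L₂. -/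
/-!
Write `r = √(9 - 12β²)`, so `r ≥ 0` and `r² = 9 - 12β²`. Isolating the outer square root in each
inequality and squaring, then eliminating `r²`, leaves an inequality linear in `r`:
`3 - 6β - 8β² < (1 + 4β) r` for `L₀ < L₁` and `4β² - 6β - 3 < (4β - 1) r` for `L₁ < L₂`.
Squaring once more turns these into `0 < 4β (3 + 4β)² (3 - 4β)` and
`0 < 4β (27 - 30β - 36β² + 52β³)`, which hold for `0 < β < 3/4` and `0 < β ≤ √3/2` respectively;
for `β ≥ 3/4` the first one is immediate since its left side is negative.
-/

theorem key_ineq_L₀_L₁ {β r : ℝ} (hβ : 0 < β) (hr : 0 ≤ r) (hr2 : r ^ 2 = 9 - 12 * β ^ 2) :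
    3 - 6 * β - 8 * β ^ 2 < (1 + 4 * β) * r := by
  rcases le_or_gt (3 / 4) β with hβ' | hβ'
  · nlinarith [mul_nonneg (by linarith : (0 : ℝ) ≤ 1 + 4 * β) hr]
  · have hsq : (3 - 6 * β - 8 * β ^ 2) ^ 2 < ((1 + 4 * β) * r) ^ 2 := by
      have : 0 < 4 * β * (3 + 4 * β) ^ 2 * (3 - 4 * β) := by
        have : 0 < 3 - 4 * β := by linarith
        positivity
      linear_combination -(1 + 4 * β) ^ 2 * hr2 + this
    exact (le_abs_self _).trans_lt (abs_lt_of_sq_lt_sq hsq (mul_nonneg (by linarith) hr))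

theorem key_ineq_L₁_L₂ {β r : ℝ} (hβ : 0 < β) (hr2 : r ^ 2 = 9 - 12 * β ^ 2) :
    4 * β ^ 2 - 6 * β - 3 < (4 * β - 1) * r := by
  have hβ2 : β ^ 2 ≤ 3 / 4 := by nlinarith
  have hβ1 : β < 1 := by nlinarith
  have hpos : 0 < 3 + 6 * β - 4 * β ^ 2 := by nlinarith
  have hsq : ((4 * β - 1) * r) ^ 2 < (3 + 6 * β - 4 * β ^ 2) ^ 2 := by
    have : 0 < 4 * β * (27 - 30 * β - 36 * β ^ 2 + 52 * β ^ 3) := by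
      have : 0 < 27 - 30 * β - 36 * β ^ 2 + 52 * β ^ 3 := by
        nlinarith [sq_nonneg (β - 3 / 4), sq_nonneg (β - 1 / 2)]
      positivity
    linear_combination (4 * β - 1) ^ 2 * hr2 + this
  linarith [neg_abs_le ((4 * β - 1) * r), abs_lt_of_sq_lt_sq hsq hpos.le]

theorem foldL₀_lt_foldL₁ {β r : ℝ} (hβ : 0 < β) (hr : 0 ≤ r) (hr2 : r ^ 2 = 9 - 12 * β ^ 2) :
    (-9 - 6 * β + r + √2 * √(15 + r - 2 * β * (-3 + 2 * β + r))) / 12 < -1 / 2 + r / 6 := by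
  have hsqrt : √(2 * (15 + r - 2 * β * (-3 + 2 * β + r))) < 3 + 6 * β + r := by
    rw [Real.sqrt_lt' (by positivity)]
    linear_combination -hr2 + 4 * key_ineq_L₀_L₁ hβ hr hr2
  rw [Real.sqrt_mul zero_le_two] at hsqrt
  linarith

theorem foldL₁_lt_foldL₂ {β r : ℝ} (hβ : 0 < β) (hr2 : r ^ 2 = 9 - 12 * β ^ 2) :
    -1 / 2 + r / 6 < (-9 + 6 * β + r + √2 * √(15 + r + 2 * β * (-3 + 2 * β + r))) / 12 := by
  have hsqrt : 3 - 6 * β + r < √(2 * (15 + r + 2 * β * (-3 + 2 * β + r))) :=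
    Real.lt_sqrt_of_sq_lt (by linear_combination hr2 + 4 * key_ineq_L₁_L₂ hβ hr2)
  rw [Real.sqrt_mul zero_le_two] at hsqrt
  linarith

/-- For β ∈ (0, √3/2) the critical values L₀, L₁, L₂ satisfy L₀ < L₁ < L₂. -/
theorem stmt16 (β : ℝ) (hβ : β ∈ Set.Ioo (0 : ℝ) (Real.sqrt 3 / 2)) :
    let r : ℝ := Real.sqrt (9 - 12 * β^2)
    let L₀ : ℝ := (-9 - 6*β + r +
      Real.sqrt 2 * Real.sqrt (15 + r - 2*β*(-3 + 2*β + r))) / 12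
    let L₁ : ℝ := -1/2 + r / 6
    let L₂ : ℝ := (-9 + 6*β + r +
      Real.sqrt 2 * Real.sqrt (15 + r + 2*β*(-3 + 2*β + r))) / 12
    L₀ < L₁ ∧ L₁ < L₂ := by
  obtain ⟨hβ0, hβ1⟩ := hβ
  have h2β : (2 * β) ^ 2 < 3 := (Real.lt_sqrt (by positivity)).1 (by linarith)
  have hr2 : √(9 - 12 * β ^ 2) ^ 2 = 9 - 12 * β ^ 2 := Real.sq_sqrt (by linarith)
  exact ⟨foldL₀_lt_foldL₁ hβ0 (Real.sqrt_nonneg _) hr2, foldL₁_lt_foldL₂ hβ0 hr2⟩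
end
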